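/- Let T = k[s⁴, t⁴] ⊂ R = k[s⁴, s³t, st³, t⁴] ⊂ k[s,t]. Then R ≅ T ⊕ T ⊕ T ⊕ L as T-modules, where L = (s⁴, t⁴)T is the ideal of T generated by s⁴ and t⁴, and L is not a free T-module. -/

import Mathlib

set_option synthInstance.maxHeartbeats 1000000
set_option maxHeartbeats 1000000

open MvPolynomial

noncomputable section

variable (k : Type) [Field k]

/-- `s` and `t`, the two variables of `k[s,t]`. -/
def sVar : MvPolynomial (Fin 2) k := X 0
def tVar : MvPolynomial (Fin 2) k := X 1

/-- `T = k[s⁴, t⁴]`, as a subalgebra of `k[s,t]`. -/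
def Tsub : Subalgebra k (MvPolynomial (Fin 2) k) :=
  Algebra.adjoin k {sVar k ^ 4, tVar k ^ 4}

/-- `R = k[s⁴, s³t, st³, t⁴]`, as a subalgebra of `k[s,t]`. -/
def Rsub : Subalgebra k (MvPolynomial (Fin 2) k) :=
  Algebra.adjoin k {sVar k ^ 4, sVar k ^ 3 * tVar k, sVar k * tVar k ^ 3, tVar k ^ 4}

lemma Tsub_support {p : MvPolynomial (Fin 2) k} (hp : p ∈ Tsub k) :
    ∀ m ∈ p.support, 4 ∣ m 0 ∧ 4 ∣ m 1 := by
  induction hp using Algebra.adjoin_induction with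
  | mem x hx =>
    rcases hx with rfl | rfl <;> intro m hm <;>
      [rw [show sVar k = X 0 from rfl, support_X_pow] at hm;
       rw [show tVar k = X 1 from rfl, support_X_pow] at hm] <;>
      simp_all [Finsupp.single_apply]
  | algebraMap r =>
    intro m hm
    have h0 : m = 0 := by
      have := MvPolynomial.support_monomial_subset (s := (0 : Fin 2 →₀ ℕ)) (a := r)
      rw [← MvPolynomial.C_apply] at this
      simpa using this hm
    simp [h0]
  | add x y hx hy ihx ihy =>
    intro m hm
    rcases Finset.mem_union.mp (MvPolynomial.support_add hm) with h | h
    exacts [ihx m h, ihy m h]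
  | mul x y hx hy ihx ihy =>
    intro m hm
    obtain ⟨a, ha, b, hb, rfl⟩ := Finset.mem_add.mp (MvPolynomial.support_mul x y hm)
    obtain ⟨h1, h2⟩ := ihx a ha
    obtain ⟨h3, h4⟩ := ihy b hb
    simp only [Finsupp.add_apply]
    exact ⟨dvd_add h1 h3, dvd_add h2 h4⟩

def resid (m : Fin 2 →₀ ℕ) : ZMod 4 × ZMod 4 := ((m 0 : ZMod 4), (m 1 : ZMod 4))

def okSub (S : Set (ZMod 4 × ZMod 4)) : Submodule (Tsub k) (MvPolynomial (Fin 2) k) where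
  carrier := {p | ∀ m ∈ p.support, resid m ∈ S}
  zero_mem' := by simp
  add_mem' := by
    intro a b ha hb m hm
    rcases Finset.mem_union.mp (MvPolynomial.support_add hm) with h | h
    exacts [ha m h, hb m h]
  smul_mem' := by
    intro c p hp m hm
    have hcp : c • p = (c : MvPolynomial (Fin 2) k) * p := rfl
    rw [hcp] at hm
    obtain ⟨a, ha, b, hb, rfl⟩ := Finset.mem_add.mp (MvPolynomial.support_mul _ p hm)
    obtain ⟨h1, h2⟩ := Tsub_support k c.2 a ha
    have e1 : ((a 0 : ZMod 4)) = 0 := by rwa [ZMod.natCast_eq_zero_iff]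
    have e2 : ((a 1 : ZMod 4)) = 0 := by rwa [ZMod.natCast_eq_zero_iff]
    have : resid (a + b) = resid b := by
      simp [resid, Prod.ext_iff, Finsupp.add_apply, Nat.cast_add, e1, e2]
    rw [this]
    exact hp b hb

lemma okSub_mono {S S' : Set (ZMod 4 × ZMod 4)} (h : S ⊆ S') : okSub k S ≤ okSub k S' :=
  fun _ hp m hm => h (hp m hm)

lemma okSub_disjoint {S S' : Set (ZMod 4 × ZMod 4)} (h : ∀ r, r ∈ S → r ∈ S' → False)
    {a b : Submodule (Tsub k) (MvPolynomial (Fin 2) k)} (ha : a ≤ okSub k S)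
    (hb : b ≤ okSub k S') : Disjoint a b := by
  rw [Submodule.disjoint_def]
  intro x hxa hxb
  rw [← MvPolynomial.support_eq_empty, Finset.eq_empty_iff_forall_notMem]
  intro m hm
  exact h _ (ha hxa m hm) (hb hxb m hm)

lemma support_sm (a b : ℕ) :
    (sVar k ^ a * tVar k ^ b).support = {Finsupp.single 0 a + Finsupp.single 1 b} := by
  classical
  rw [show sVar k = X 0 from rfl, show tVar k = X 1 from rfl, X_pow_eq_monomial,
    X_pow_eq_monomial, monomial_mul, support_monomial, if_neg (by norm_num)]

lemma resid_sm (a b : ℕ) : resid (Finsupp.single 0 a + Finsupp.single 1 b) = ((a : ZMod 4), (b : ZMod 4)) := by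
  simp [resid, Finsupp.add_apply, Finsupp.single_apply]

lemma span_single_le (a b : ℕ) :
    Submodule.span (Tsub k) {sVar k ^ a * tVar k ^ b} ≤ okSub k {((a : ZMod 4), (b : ZMod 4))} := by
  rw [Submodule.span_le]
  rintro x rfl m hm
  rw [support_sm] at hm
  rw [Finset.mem_singleton.mp hm, resid_sm]
  exact rfl

lemma span_one_le :
    Submodule.span (Tsub k) {(1 : MvPolynomial (Fin 2) k)} ≤ okSub k {((0 : ZMod 4), (0 : ZMod 4))} := by
  rw [Submodule.span_le]
  rintro x rfl m hm
  have hm0 : m = 0 := by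
    have h1 : (1 : MvPolynomial (Fin 2) k) = monomial 0 1 := by
      rw [← MvPolynomial.C_apply, map_one]
    rw [h1] at hm
    simpa using MvPolynomial.support_monomial_subset hm
  subst hm0
  show resid 0 ∈ _
  simp [resid]

lemma span_pair_le :
    Submodule.span (Tsub k) {sVar k ^ 6 * tVar k ^ 2, sVar k ^ 2 * tVar k ^ 6} ≤
      okSub k {((2 : ZMod 4), (2 : ZMod 4))} := by
  rw [Submodule.span_le]
  rintro x (rfl | rfl) m hm <;> rw [support_sm] at hm <;>
    rw [Finset.mem_singleton.mp hm, resid_sm] <;>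
    · rw [Set.mem_singleton_iff, Prod.ext_iff]
      exact ⟨by decide, by decide⟩

def clsv : Fin 4 → ZMod 4 × ZMod 4 := ![(0, 0), (3, 1), (1, 3), (2, 2)]

lemma indep :
    iSupIndep
      ![Submodule.span (Tsub k) {(1 : MvPolynomial (Fin 2) k)},
        Submodule.span (Tsub k) {sVar k ^ 3 * tVar k},
        Submodule.span (Tsub k) {sVar k * tVar k ^ 3},
        Submodule.span (Tsub k) {sVar k ^ 6 * tVar k ^ 2, sVar k ^ 2 * tVar k ^ 6}] := by
  set f := ![Submodule.span (Tsub k) {(1 : MvPolynomial (Fin 2) k)},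
        Submodule.span (Tsub k) {sVar k ^ 3 * tVar k},
        Submodule.span (Tsub k) {sVar k * tVar k ^ 3},
        Submodule.span (Tsub k) {sVar k ^ 6 * tVar k ^ 2, sVar k ^ 2 * tVar k ^ 6}] with hf
  have hb : ∀ i : Fin 4, f i ≤ okSub k {clsv i} := by
    intro i
    fin_cases i
    · exact span_one_le k
    · have h := span_single_le k 3 1; rw [pow_one] at h; exact h
    · have h := span_single_le k 1 3; rw [pow_one] at h; exact h
    · exact span_pair_le k
  rw [iSupIndep_def]
  intro i
  refine okSub_disjoint k (S := {clsv i}) (S' := {clsv i}ᶜ) ?_ (hb i) ?_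
  · intro r h1 h2; exact h2 h1
  · refine iSup_le fun j => iSup_le fun hj => (hb j).trans (okSub_mono k ?_)
    intro r hr
    rw [Set.mem_singleton_iff] at hr
    subst hr
    intro hc
    rw [Set.mem_singleton_iff] at hc
    apply hj
    fin_cases i <;> fin_cases j <;> first | rfl | (exfalso; revert hc; decide)

def GG : Set (MvPolynomial (Fin 2) k) :=
  {1, sVar k ^ 3 * tVar k, sVar k * tVar k ^ 3, sVar k ^ 6 * tVar k ^ 2, sVar k ^ 2 * tVar k ^ 6}

def MM : Submodule (Tsub k) (MvPolynomial (Fin 2) k) := Submodule.span (Tsub k) (GG k)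

lemma hs4 : sVar k ^ 4 ∈ Tsub k := Algebra.subset_adjoin (Set.mem_insert _ _)
lemma ht4 : tVar k ^ 4 ∈ Tsub k := Algebra.subset_adjoin (Set.mem_insert_of_mem _ rfl)

lemma hst4 (i j : ℕ) : sVar k ^ (4 * i) * tVar k ^ (4 * j) ∈ Tsub k := by
  have := mul_mem (pow_mem (hs4 k) i) (pow_mem (ht4 k) j)
  rwa [← pow_mul, ← pow_mul] at this

lemma memM (c x g : MvPolynomial (Fin 2) k) (hc : c ∈ Tsub k) (hg : g ∈ GG k)
    (hx : x = c * g) : x ∈ MM k := by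
  have : c * g = (⟨c, hc⟩ : Tsub k) • g := rfl
  rw [hx, this]
  exact Submodule.smul_mem _ _ (Submodule.subset_span hg)

lemma g1M : (1 : MvPolynomial (Fin 2) k) ∈ GG k := Set.mem_insert _ _
lemma g2M : sVar k ^ 3 * tVar k ∈ GG k := by right; left; rfl
lemma g3M : sVar k * tVar k ^ 3 ∈ GG k := by right; right; left; rfl
lemma g4M : sVar k ^ 6 * tVar k ^ 2 ∈ GG k := by right; right; right; left; rfl
lemma g5M : sVar k ^ 2 * tVar k ^ 6 ∈ GG k := by right; right; right; right; rfl

lemma mulMM : ∀ x ∈ MM k, ∀ y ∈ MM k, x * y ∈ MM k := by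
  have key : MM k * MM k ≤ MM k := by
    rw [MM, Submodule.span_mul_span, Submodule.span_le]
    rintro z ⟨x, hx, y, hy, rfl⟩
    simp only [GG, Set.mem_insert_iff, Set.mem_singleton_iff] at hx hy
    have c0 := one_mem (Tsub k)
    have c44 := hst4 k 1 1
    have c80 := hst4 k 2 0
    have c08 := hst4 k 0 2
    have c124 := hst4 k 3 1
    have c88 := hst4 k 2 2
    have c412 := hst4 k 1 3
    norm_num at c44 c80 c08 c124 c88 c412
    rcases hx with rfl | rfl | rfl | rfl | rfl <;> rcases hy with rfl | rfl | rfl | rfl | rfl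
    · exact memM k _ _ _ c0 (g1M k) (by ring)
    · exact memM k _ _ _ c0 (g2M k) (by ring)
    · exact memM k _ _ _ c0 (g3M k) (by ring)
    · exact memM k _ _ _ c0 (g4M k) (by ring)
    · exact memM k _ _ _ c0 (g5M k) (by ring)
    · exact memM k _ _ _ c0 (g2M k) (by ring)
    · exact memM k _ _ _ c0 (g4M k) (by ring)
    · exact memM k _ _ _ c44 (g1M k) (by ring)
    · exact memM k _ _ _ c80 (g3M k) (by ring)
    · exact memM k _ _ _ c44 (g3M k) (by ring)
    · exact memM k _ _ _ c0 (g3M k) (by ring)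
    · exact memM k _ _ _ c44 (g1M k) (by ring)
    · exact memM k _ _ _ c0 (g5M k) (by ring)
    · exact memM k _ _ _ c44 (g2M k) (by ring)
    · exact memM k _ _ _ c08 (g2M k) (by ring)
    · exact memM k _ _ _ c0 (g4M k) (by ring)
    · exact memM k _ _ _ c80 (g3M k) (by ring)
    · exact memM k _ _ _ c44 (g2M k) (by ring)
    · exact memM k _ _ _ c124 (g1M k) (by ring)
    · exact memM k _ _ _ c88 (g1M k) (by ring)
    · exact memM k _ _ _ c0 (g5M k) (by ring)
    · exact memM k _ _ _ c44 (g3M k) (by ring)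
    · exact memM k _ _ _ c08 (g2M k) (by ring)
    · exact memM k _ _ _ c88 (g1M k) (by ring)
    · exact memM k _ _ _ c412 (g1M k) (by ring)
  exact fun x hx y hy => key (Submodule.mul_mem_mul hx hy)

lemma span_eq_decomp :
    Submodule.span (Tsub k) ((Rsub k : Set (MvPolynomial (Fin 2) k))) =
      Submodule.span (Tsub k) {(1 : MvPolynomial (Fin 2) k)} ⊔
      Submodule.span (Tsub k) {sVar k ^ 3 * tVar k} ⊔
      Submodule.span (Tsub k) {sVar k * tVar k ^ 3} ⊔
      Submodule.span (Tsub k) {sVar k ^ 6 * tVar k ^ 2, sVar k ^ 2 * tVar k ^ 6} := by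
  have hRHS : Submodule.span (Tsub k) {(1 : MvPolynomial (Fin 2) k)} ⊔
      Submodule.span (Tsub k) {sVar k ^ 3 * tVar k} ⊔
      Submodule.span (Tsub k) {sVar k * tVar k ^ 3} ⊔
      Submodule.span (Tsub k) {sVar k ^ 6 * tVar k ^ 2, sVar k ^ 2 * tVar k ^ 6} = MM k := by
    rw [MM, GG]
    rw [show ({1, sVar k ^ 3 * tVar k, sVar k * tVar k ^ 3, sVar k ^ 6 * tVar k ^ 2,
        sVar k ^ 2 * tVar k ^ 6} : Set (MvPolynomial (Fin 2) k)) =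
      ({1} ∪ {sVar k ^ 3 * tVar k}) ∪ {sVar k * tVar k ^ 3} ∪
        {sVar k ^ 6 * tVar k ^ 2, sVar k ^ 2 * tVar k ^ 6} from by
          simp only [Set.insert_eq, Set.union_assoc]]
    simp only [Submodule.span_union]
  rw [hRHS]
  apply le_antisymm
  · rw [Submodule.span_le]
    intro x hx
    induction hx using Algebra.adjoin_induction with
    | mem y hy =>
      rcases hy with rfl | rfl | rfl | rfl
      · exact memM k _ _ _ (hs4 k) (g1M k) (by ring)
      · exact memM k _ _ _ (one_mem _) (g2M k) (by ring)
      · exact memM k _ _ _ (one_mem _) (g3M k) (by ring)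
      · exact memM k _ _ _ (ht4 k) (g1M k) (by ring)
    | algebraMap r =>
      exact memM k _ _ _ (Subalgebra.algebraMap_mem _ r) (g1M k) (by rw [mul_one])
    | add x y hx hy ihx ihy => exact add_mem ihx ihy
    | mul x y hx hy ihx ihy => exact mulMM k x ihx y ihy
  · rw [MM, Submodule.span_le]
    rintro x (rfl | rfl | rfl | rfl | rfl)
    · exact Submodule.subset_span (one_mem (Rsub k))
    · exact Submodule.subset_span (Algebra.subset_adjoin (by right; left; rfl))
    · exact Submodule.subset_span (Algebra.subset_adjoin (by right; right; left; rfl))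
    · refine Submodule.subset_span ?_
      have h2 : sVar k ^ 3 * tVar k ∈ Rsub k := Algebra.subset_adjoin (by right; left; rfl)
      have := mul_mem h2 h2
      rwa [show (sVar k ^ 3 * tVar k) * (sVar k ^ 3 * tVar k) = sVar k ^ 6 * tVar k ^ 2 from by ring] at this
    · refine Submodule.subset_span ?_
      have h3 : sVar k * tVar k ^ 3 ∈ Rsub k := Algebra.subset_adjoin (by right; right; left; rfl)
      have := mul_mem h3 h3
      rwa [show (sVar k * tVar k ^ 3) * (sVar k * tVar k ^ 3) = sVar k ^ 2 * tVar k ^ 6 from by ring] at this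

def a4 : Tsub k := ⟨sVar k ^ 4, hs4 k⟩
def b4 : Tsub k := ⟨tVar k ^ 4, ht4 k⟩
def II : Ideal (Tsub k) := Ideal.span {a4 k, b4 k}
def LL : Submodule (Tsub k) (MvPolynomial (Fin 2) k) :=
  Submodule.span (Tsub k) {sVar k ^ 6 * tVar k ^ 2, sVar k ^ 2 * tVar k ^ 6}

lemma L_rep : ∀ p ∈ LL k, ∃ c : Tsub k, c ∈ II k ∧
    sVar k ^ 2 * tVar k ^ 2 * (c : MvPolynomial (Fin 2) k) = p := by
  intro p hp
  induction hp using Submodule.span_induction with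
  | mem x hx =>
    rcases hx with rfl | rfl
    · exact ⟨a4 k, Submodule.subset_span (Set.mem_insert _ _), by show _ * (sVar k ^ 4) = _; ring⟩
    · exact ⟨b4 k, Submodule.subset_span (Set.mem_insert_of_mem _ rfl), by
        show _ * (tVar k ^ 4) = _; ring⟩
  | zero => exact ⟨0, zero_mem _, by simp⟩
  | add x y hx hy ihx ihy =>
    obtain ⟨cx, hcx, ex⟩ := ihx
    obtain ⟨cy, hcy, ey⟩ := ihy
    exact ⟨cx + cy, add_mem hcx hcy, by push_cast; rw [mul_add, ex, ey]⟩
  | smul r x hx ih =>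
    obtain ⟨c, hc, e⟩ := ih
    refine ⟨r * c, Ideal.mul_mem_left _ _ hc, ?_⟩
    have : r • x = (r : MvPolynomial (Fin 2) k) * x := rfl
    rw [this, ← e]
    push_cast
    ring

lemma stq_ne : (sVar k ^ 2 * tVar k ^ 2 : MvPolynomial (Fin 2) k) ≠ 0 :=
  mul_ne_zero (pow_ne_zero _ (MvPolynomial.X_ne_zero (s := (0 : Fin 2))))
    (pow_ne_zero _ (MvPolynomial.X_ne_zero (s := (1 : Fin 2))))

def muMap : II k →ₗ[Tsub k] MvPolynomial (Fin 2) k where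
  toFun x := sVar k ^ 2 * tVar k ^ 2 * ((x : Tsub k) : MvPolynomial (Fin 2) k)
  map_add' x y := by push_cast; ring
  map_smul' r x := by
    show _ = r • _
    rw [show ∀ q : MvPolynomial (Fin 2) k, r • q = (r : MvPolynomial (Fin 2) k) * q
      from fun _ => rfl]
    show sVar k ^ 2 * tVar k ^ 2 * ((r • (x : Tsub k) : Tsub k) : MvPolynomial (Fin 2) k) = _
    rw [smul_eq_mul]
    push_cast
    ring

lemma muMap_apply (x : II k) :
    muMap k x = sVar k ^ 2 * tVar k ^ 2 * ((x : Tsub k) : MvPolynomial (Fin 2) k) := rfl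

lemma mul_mem_LL : ∀ c ∈ II k,
    sVar k ^ 2 * tVar k ^ 2 * (c : MvPolynomial (Fin 2) k) ∈ LL k := by
  intro c hc
  induction hc using Submodule.span_induction with
  | mem y hy =>
    rcases hy with rfl | rfl
    · show sVar k ^ 2 * tVar k ^ 2 * (sVar k ^ 4) ∈ LL k
      rw [show sVar k ^ 2 * tVar k ^ 2 * (sVar k ^ 4) = sVar k ^ 6 * tVar k ^ 2 from by ring]
      exact Submodule.subset_span (Set.mem_insert _ _)
    · show sVar k ^ 2 * tVar k ^ 2 * (tVar k ^ 4) ∈ LL k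
      rw [show sVar k ^ 2 * tVar k ^ 2 * (tVar k ^ 4) = sVar k ^ 2 * tVar k ^ 6 from by ring]
      exact Submodule.subset_span (Set.mem_insert_of_mem _ rfl)
  | zero => simpa using zero_mem (LL k)
  | add y z hy hz ihy ihz =>
    show sVar k ^ 2 * tVar k ^ 2 * ((y : MvPolynomial (Fin 2) k) + z) ∈ LL k
    rw [mul_add]
    exact add_mem ihy ihz
  | smul r y hy ih =>
    have he : sVar k ^ 2 * tVar k ^ 2 * ((r • y : Tsub k) : MvPolynomial (Fin 2) k) =
        r • (sVar k ^ 2 * tVar k ^ 2 * (y : MvPolynomial (Fin 2) k)) := by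
      rw [show ((r • y : Tsub k) : MvPolynomial (Fin 2) k) =
        (r : MvPolynomial (Fin 2) k) * (y : MvPolynomial (Fin 2) k) from rfl,
        show r • (sVar k ^ 2 * tVar k ^ 2 * (y : MvPolynomial (Fin 2) k)) =
        (r : MvPolynomial (Fin 2) k) * (sVar k ^ 2 * tVar k ^ 2 *
          (y : MvPolynomial (Fin 2) k)) from rfl]
      ring
    rw [he]
    exact Submodule.smul_mem _ _ ih

lemma muMap_mem (x : II k) : muMap k x ∈ LL k := by
  rw [muMap_apply]
  exact mul_mem_LL k _ x.2

def phiMap : II k →ₗ[Tsub k] LL k := (muMap k).codRestrict (LL k) (muMap_mem k)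

lemma phi_bij : Function.Bijective (phiMap k) := by
  constructor
  · intro x y hxy
    have h : muMap k x = muMap k y := congrArg Subtype.val hxy
    rw [muMap_apply, muMap_apply] at h
    have : ((x : Tsub k) : MvPolynomial (Fin 2) k) = ((y : Tsub k) : MvPolynomial (Fin 2) k) :=
      mul_left_cancel₀ (stq_ne k) h
    exact Subtype.ext (Subtype.ext this)
  · rintro ⟨y, hy⟩
    obtain ⟨c, hc, e⟩ := L_rep k y hy
    exact ⟨⟨c, hc⟩, Subtype.ext e⟩

def theIso : LL k ≃ₗ[Tsub k] II k := (LinearEquiv.ofBijective (phiMap k) (phi_bij k)).symm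

lemma constCoeff_II : ∀ c : Tsub k, c ∈ II k →
    constantCoeff ((c : Tsub k) : MvPolynomial (Fin 2) k) = 0 := by
  intro c hc
  obtain ⟨a, b, hab⟩ := Ideal.mem_span_pair.mp hc
  rw [← hab]
  push_cast
  rw [show ((a4 k : Tsub k) : MvPolynomial (Fin 2) k) = X 0 ^ 4 from rfl,
    show ((b4 k : Tsub k) : MvPolynomial (Fin 2) k) = X 1 ^ 4 from rfl]
  simp

lemma primeS : Prime (sVar k) := by
  rw [show sVar k = X 0 from rfl,
    ← MulEquiv.prime_iff (p := X 0) (MvPolynomial.finSuccEquiv k 1).toRingEquiv.toMulEquiv]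
  have : (MvPolynomial.finSuccEquiv k 1).toRingEquiv.toMulEquiv (X 0) = Polynomial.X :=
    MvPolynomial.finSuccEquiv_X_zero
  rw [this]
  exact Polynomial.prime_X

lemma primeT : Prime (tVar k) := by
  rw [show tVar k = X 1 from rfl,
    ← MulEquiv.prime_iff (p := X 1) (MvPolynomial.renameEquiv k (Equiv.swap (0 : Fin 2) 1)).toRingEquiv.toMulEquiv]
  have : (MvPolynomial.renameEquiv k (Equiv.swap (0 : Fin 2) 1)).toRingEquiv.toMulEquiv (X 1)
      = X 0 := by
    show rename _ (X 1) = X 0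
    rw [rename_X, Equiv.swap_apply_right]
  rw [this]
  exact primeS k

lemma LL_not_free : ¬ Module.Free (Tsub k) (LL k) := by
  intro hfree
  haveI : Nontrivial (Tsub k) :=
    ⟨⟨0, 1, fun h => zero_ne_one
      (congrArg Subtype.val h : (0 : MvPolynomial (Fin 2) k) = 1)⟩⟩
  set b := Module.Free.chooseBasis (Tsub k) (LL k) with hbdef
  set ι := Module.Free.ChooseBasisIndex (Tsub k) (LL k)
  have xamem : sVar k ^ 6 * tVar k ^ 2 ∈ LL k :=
    Submodule.subset_span (Set.mem_insert _ _)
  have xbmem : sVar k ^ 2 * tVar k ^ 6 ∈ LL k :=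
    Submodule.subset_span (Set.mem_insert_of_mem _ rfl)
  set xa : LL k := ⟨_, xamem⟩
  set xb : LL k := ⟨_, xbmem⟩
  have xane : xa ≠ 0 := by
    intro h
    have := congrArg Subtype.val h
    exact mul_ne_zero (pow_ne_zero _ (MvPolynomial.X_ne_zero (s := (0 : Fin 2))))
      (pow_ne_zero _ (MvPolynomial.X_ne_zero (s := (1 : Fin 2)))) this
  -- index type is a subsingleton
  have hss : ∀ i j : ι, i = j := by
    intro i j
    by_contra hij
    obtain ⟨ci, hciI, eci⟩ := L_rep k (b i).1 (b i).2
    obtain ⟨cj, hcjI, ecj⟩ := L_rep k (b j).1 (b j).2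
    have hrel : cj • b i = ci • b j := by
      apply Subtype.ext
      show (cj : MvPolynomial (Fin 2) k) * (b i : MvPolynomial (Fin 2) k) =
        (ci : MvPolynomial (Fin 2) k) * (b j : MvPolynomial (Fin 2) k)
      rw [← eci, ← ecj]
      ring
    have hr := congrArg b.repr hrel
    rw [map_smul, map_smul, b.repr_self, b.repr_self] at hr
    have hi := DFunLike.congr_fun hr i
    rw [Finsupp.smul_apply, Finsupp.smul_apply, Finsupp.single_apply, Finsupp.single_apply,
      if_pos rfl, if_neg (Ne.symm hij)] at hi
    rw [smul_eq_mul, smul_eq_mul, mul_one, mul_zero] at hi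
    -- hi : cj = 0
    apply b.ne_zero j
    apply Subtype.ext
    show (b j : MvPolynomial (Fin 2) k) = 0
    rw [← ecj, hi]
    push_cast
    ring
  have hne : Nonempty ι := by
    by_contra h
    haveI hie := not_nonempty_iff.mp h
    haveI : Subsingleton (ι →₀ Tsub k) :=
      ⟨fun f g => Finsupp.ext fun a => (hie.elim a)⟩
    exact xane (b.repr.injective (Subsingleton.elim _ _))
  obtain ⟨i0⟩ := hne
  have hrep : ∀ x : LL k, x = (b.repr x i0) • b i0 := by
    intro x
    have h1 : b.repr x = Finsupp.single i0 (b.repr x i0) := by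
      ext a
      rw [hss a i0]
      simp
    conv_lhs => rw [← b.repr.symm_apply_apply x, h1]
    exact b.repr_symm_single i0 _
  obtain ⟨g', hg'I, eg⟩ := L_rep k (b i0).1 (b i0).2
  set p := b.repr xa i0
  set q := b.repr xb i0
  have ea : sVar k ^ 6 * tVar k ^ 2 =
      (p : MvPolynomial (Fin 2) k) * (b i0 : MvPolynomial (Fin 2) k) :=
    congrArg Subtype.val (hrep xa)
  have eb : sVar k ^ 2 * tVar k ^ 6 =
      (q : MvPolynomial (Fin 2) k) * (b i0 : MvPolynomial (Fin 2) k) :=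
    congrArg Subtype.val (hrep xb)
  have hXa : sVar k ^ 4 = (p : MvPolynomial (Fin 2) k) * (g' : MvPolynomial (Fin 2) k) := by
    apply mul_left_cancel₀ (stq_ne k)
    calc sVar k ^ 2 * tVar k ^ 2 * sVar k ^ 4 = sVar k ^ 6 * tVar k ^ 2 := by ring
    _ = (p : MvPolynomial (Fin 2) k) * (b i0 : MvPolynomial (Fin 2) k) := ea
    _ = (p : MvPolynomial (Fin 2) k) * (sVar k ^ 2 * tVar k ^ 2 *
        (g' : MvPolynomial (Fin 2) k)) := by rw [eg]
    _ = sVar k ^ 2 * tVar k ^ 2 * ((p : MvPolynomial (Fin 2) k) *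
        (g' : MvPolynomial (Fin 2) k)) := by ring
  have hXb : tVar k ^ 4 = (q : MvPolynomial (Fin 2) k) * (g' : MvPolynomial (Fin 2) k) := by
    apply mul_left_cancel₀ (stq_ne k)
    calc sVar k ^ 2 * tVar k ^ 2 * tVar k ^ 4 = sVar k ^ 2 * tVar k ^ 6 := by ring
    _ = (q : MvPolynomial (Fin 2) k) * (b i0 : MvPolynomial (Fin 2) k) := eb
    _ = (q : MvPolynomial (Fin 2) k) * (sVar k ^ 2 * tVar k ^ 2 *
        (g' : MvPolynomial (Fin 2) k)) := by rw [eg]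
    _ = sVar k ^ 2 * tVar k ^ 2 * ((q : MvPolynomial (Fin 2) k) *
        (g' : MvPolynomial (Fin 2) k)) := by ring
  have hdvd0 : (g' : MvPolynomial (Fin 2) k) ∣ sVar k ^ 4 :=
    ⟨(p : MvPolynomial (Fin 2) k), by rw [hXa]; ring⟩
  have hdvd1 : (g' : MvPolynomial (Fin 2) k) ∣ tVar k ^ 4 :=
    ⟨(q : MvPolynomial (Fin 2) k), by rw [hXb]; ring⟩
  have hnotunit : ¬ IsUnit ((g' : Tsub k) : MvPolynomial (Fin 2) k) := by
    intro hu
    obtain ⟨v, hv⟩ := isUnit_iff_exists_inv.mp hu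
    have := congrArg constantCoeff hv
    rw [map_mul, map_one, constCoeff_II k g' hg'I, zero_mul] at this
    exact zero_ne_one this
  obtain ⟨i, _, hiass⟩ := (dvd_prime_pow (primeS k) 4).mp hdvd0
  rcases Nat.eq_zero_or_pos i with rfl | hipos
  · rw [pow_zero] at hiass
    exact hnotunit (associated_one_iff_isUnit.mp hiass)
  · have hSg : sVar k ∣ (g' : MvPolynomial (Fin 2) k) :=
      dvd_trans (dvd_pow_self (sVar k) (Nat.pos_iff_ne_zero.mp hipos)) hiass.symm.dvd
    have : sVar k ∣ tVar k ^ 4 := dvd_trans hSg hdvd1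
    have h01 : sVar k ∣ tVar k := (primeS k).dvd_of_dvd_pow this
    rw [show sVar k = X 0 from rfl, show tVar k = X 1 from rfl, MvPolynomial.X_dvd_X] at h01
    exact absurd h01 (by decide)

/-- As a module over `T = k[s⁴,t⁴]`, the ring
`R = k[s⁴, s³t, st³, t⁴]` decomposes as `R = T·1 ⊕ T·s³t ⊕ T·st³ ⊕ L`, where the
summand `L` (spanned by the monomials `sᵃtᵇ ∈ R` with `a ≡ b ≡ 2 (mod 4)`, i.e.
generated by `s⁶t²` and `s²t⁶`) is isomorphic to the ideal `(s⁴, t⁴)T` of `T` and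
is not a free `T`-module. -/
theorem quartic_curve_module_decomposition :
    (Submodule.span (Tsub k) ((Rsub k : Set (MvPolynomial (Fin 2) k))) =
      Submodule.span (Tsub k) {(1 : MvPolynomial (Fin 2) k)} ⊔
      Submodule.span (Tsub k) {sVar k ^ 3 * tVar k} ⊔
      Submodule.span (Tsub k) {sVar k * tVar k ^ 3} ⊔
      Submodule.span (Tsub k) {sVar k ^ 6 * tVar k ^ 2, sVar k ^ 2 * tVar k ^ 6}) ∧
    iSupIndep
      ![Submodule.span (Tsub k) {(1 : MvPolynomial (Fin 2) k)},
        Submodule.span (Tsub k) {sVar k ^ 3 * tVar k},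
        Submodule.span (Tsub k) {sVar k * tVar k ^ 3},
        Submodule.span (Tsub k) {sVar k ^ 6 * tVar k ^ 2, sVar k ^ 2 * tVar k ^ 6}] ∧
    Nonempty
      ((Submodule.span (Tsub k) {sVar k ^ 6 * tVar k ^ 2, sVar k ^ 2 * tVar k ^ 6})
        ≃ₗ[Tsub k]
       (Ideal.span {(⟨sVar k ^ 4, Algebra.subset_adjoin (Set.mem_insert _ _)⟩ : Tsub k),
          ⟨tVar k ^ 4, Algebra.subset_adjoin (Set.mem_insert_of_mem _ rfl)⟩})) ∧
    ¬ Module.Free (Tsub k)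
      (Submodule.span (Tsub k) {sVar k ^ 6 * tVar k ^ 2, sVar k ^ 2 * tVar k ^ 6}) := by
  exact ⟨span_eq_decomp k, indep k, ⟨theIso k⟩, LL_not_free k⟩

end
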